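/- Let F: A → B be a morphism of cdgas over a field k of characteristic 0 that is a quasi-isomorphism, let η ∈ A¹ ∩ ker d, and let m ≥ 1. Then the induced map F ⊗ id: A(η, m) → B(F(η), m) is a quasi-isomorphism of cochain complexes. -/

import Mathlib

/-- A (positively graded) commutative differential graded algebra over a field `k`:
a grading `A : ℕ → Type` of `k`-vector spaces, a unital graded product, and a degree `+1`
differential satisfying `d ∘ d = 0`, graded commutativity and the graded Leibniz rule. -/
structure GCDA (k : Type) [Field k] where
  A : ℕ → Type
  acg : ∀ n, AddCommGroup (A n)
  amod : ∀ n, Module k (A n)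
  mul : ∀ p q : ℕ, A p → A q → A (p + q)
  one : A 0
  d : ∀ p : ℕ, A p → A (p + 1)
  d_add : ∀ p (x y : A p), d p (x + y) = d p x + d p y
  d_smul : ∀ p (c : k) (x : A p), d p (c • x) = c • d p x
  d_d : ∀ p (x : A p), d (p + 1) (d p x) = 0
  mul_add : ∀ p q (x : A p) (y z : A q), mul p q x (y + z) = mul p q x y + mul p q x z
  add_mul : ∀ p q (x y : A p) (z : A q), mul p q (x + y) z = mul p q x z + mul p q y z
  smul_mul : ∀ p q (c : k) (x : A p) (y : A q), mul p q (c • x) y = c • mul p q x y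
  mul_smul : ∀ p q (c : k) (x : A p) (y : A q), mul p q x (c • y) = c • mul p q x y
  one_mul : ∀ p (x : A p), mul 0 p one x = cast (congrArg A (Nat.zero_add p)).symm x
  mul_one : ∀ p (x : A p), mul p 0 x one = x
  mul_assoc : ∀ p q r (x : A p) (y : A q) (z : A r),
    mul (p + q) r (mul p q x y) z
      = cast (congrArg A (by omega : p + (q + r) = p + q + r)) (mul p (q + r) x (mul q r y z))
  mul_comm : ∀ p q (x : A p) (y : A q),
    mul p q x y = cast (congrArg A (by omega : q + p = p + q))
      ((-1 : k) ^ (p * q) • mul q p y x)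
  leibniz : ∀ p q (x : A p) (y : A q),
    d (p + q) (mul p q x y)
      = cast (congrArg A (by omega : p + 1 + q = p + q + 1)) (mul (p + 1) q (d p x) y)
        + cast (congrArg A (by omega : p + (q + 1) = p + q + 1))
            ((-1 : k) ^ p • mul p (q + 1) x (d q y))

attribute [instance] GCDA.acg GCDA.amod

variable {k : Type} [Field k]

/-- Left multiplication by a degree-one element, recast to land in degree `p + 1`. -/
def GCDA.etaMul (B : GCDA k) (η : B.A 1) (p : ℕ) (x : B.A p) : B.A (p + 1) :=
  cast (congrArg B.A (by omega : 1 + p = p + 1)) (B.mul 1 p η x)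

/-- The differential `d_η` of the `m`-thickening `A(η, m)`: an element of
`A^p ⊗ k[s]/(sᵐ)` is recorded as the tuple of its coefficients `(ω_0, …, ω_{m−1})`
(`ω = Σ_j ω_j ⊗ sʲ`), and `d_η(ω ⊗ φ) = dω ⊗ φ + (η ∧ ω) ⊗ sφ` becomes
`(d_η ω)_j = d(ω_j) + η ∧ ω_{j−1}`. -/
def GCDA.thickD (B : GCDA k) (η : B.A 1) (m : ℕ) (p : ℕ) (ω : Fin m → B.A p) :
    Fin m → B.A (p + 1) := fun j =>
  B.d p (ω j) +
    (if _h : (j : ℕ) = 0 then 0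
     else B.etaMul η p (ω ⟨(j : ℕ) - 1, lt_of_le_of_lt (Nat.sub_le _ _) j.isLt⟩))

/-- A morphism of cdgas: a degreewise `k`-linear map commuting with the product, unit and
differential. -/
structure GCDAHom (B C : GCDA k) where
  F : ∀ p : ℕ, B.A p → C.A p
  F_add : ∀ p (x y : B.A p), F p (x + y) = F p x + F p y
  F_smul : ∀ p (c : k) (x : B.A p), F p (c • x) = c • F p x
  F_one : F 0 B.one = C.one
  F_mul : ∀ p q (x : B.A p) (y : B.A q), F (p + q) (B.mul p q x y) = C.mul p q (F p x) (F q y)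
  F_d : ∀ p (x : B.A p), F (p + 1) (B.d p x) = C.d p (F p x)

/-- A map of (positively graded) cochain complexes is a quasi-isomorphism iff it is
injective and surjective on cohomology, expressed elementwise. -/
def IsQIso (X Y : ℕ → Type) [∀ n, AddCommGroup (X n)] [∀ n, AddCommGroup (Y n)]
    (dX : ∀ p : ℕ, X p → X (p + 1)) (dY : ∀ p : ℕ, Y p → Y (p + 1))
    (F : ∀ p : ℕ, X p → Y p) : Prop :=
  (∀ x : X 0, dX 0 x = 0 → F 0 x = 0 → x = 0) ∧
  (∀ y : Y 0, dY 0 y = 0 → ∃ x : X 0, dX 0 x = 0 ∧ F 0 x = y) ∧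
  (∀ (p : ℕ) (x : X (p + 1)), dX (p + 1) x = 0 →
    (∃ y : Y p, F (p + 1) x = dY p y) → ∃ z : X p, x = dX p z) ∧
  (∀ (p : ℕ) (y : Y (p + 1)), dY (p + 1) y = 0 →
    ∃ x : X (p + 1), dX (p + 1) x = 0 ∧ ∃ w : Y p, F (p + 1) x = y + dY p w)

/-!
Reduction modulo `s^m` gives a short exact sequence of complexes
`0 → A → A(η, m + 1) → A(η, m) → 0` whose kernel is `A ⊗ s^m`, on which `d_η` is just `d`
because `s^(m+1) = 0`. The map `F` induces a morphism between these sequences for `A` and `B`,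
so induction on `m` and the five lemma for the associated long exact cohomology sequences
(here by a direct diagram chase) show that `F ⊗ id` is a quasi-isomorphism. That `d_η² = 0`
uses `η ∧ η = 0`, which follows from graded commutativity as `2 ≠ 0` in `k`.
-/

section CastFamily

variable {ι : Type*} {X : ι → Type} [∀ i, AddCommGroup (X i)] {i j : ι}

theorem cast_family_zero (h : i = j) : cast (congrArg X h) (0 : X i) = 0 := by
  subst h; rfl

theorem cast_family_add (h : i = j) (x y : X i) :
    cast (congrArg X h) (x + y) = cast (congrArg X h) x + cast (congrArg X h) y := by
  subst h; rfl

theorem cast_family_neg (h : i = j) (x : X i) :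
    cast (congrArg X h) (-x) = -cast (congrArg X h) x := by
  subst h; rfl

theorem cast_family_eq_zero (h : i = j) {x : X i} : cast (congrArg X h) x = 0 ↔ x = 0 := by
  subst h; rfl

end CastFamily

theorem apply_cast_family {ι : Type*} {X Y : ι → Type} (F : ∀ i, X i → Y i) {i j : ι} (h : i = j)
    (x : X i) : F j (cast (congrArg X h) x) = cast (congrArg Y h) (F i x) := by
  subst h; rfl

namespace GCDA

variable (B : GCDA k)

theorem d_zero (p : ℕ) : B.d p 0 = 0 := by
  simpa using B.d_add p 0 0

theorem zero_mul (p q : ℕ) (y : B.A q) : B.mul p q 0 y = 0 := by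
  simpa using B.add_mul p q 0 0 y

theorem mul_zero (p q : ℕ) (x : B.A p) : B.mul p q x 0 = 0 := by
  simpa using B.mul_add p q x 0 0

theorem mul_self_eq_zero [NeZero (2 : k)] (η : B.A 1) : B.mul 1 1 η η = 0 := by
  have hanti : B.mul 1 1 η η = -B.mul 1 1 η η := by
    simpa using B.mul_comm 1 1 η η
  have htwo : (2 : k) • B.mul 1 1 η η = 0 := by
    rw [two_smul]; nth_rewrite 2 [hanti]; exact add_neg_cancel _
  exact (smul_eq_zero.mp htwo).resolve_left two_ne_zero

theorem d_etaMul {η : B.A 1} (hη : B.d 1 η = 0) (p : ℕ) (x : B.A p) :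
    B.d (p + 1) (B.etaMul η p x) = -B.etaMul η (p + 1) (B.d p x) := by
  simp only [etaMul]
  rw [apply_cast_family B.d (add_comm 1 p), B.leibniz 1 p η x, hη, zero_mul,
    cast_family_zero (by omega), zero_add, cast_cast, pow_one, neg_one_smul,
    cast_family_neg (by omega)]

section

variable (η : B.A 1)

theorem etaMul_zero (p : ℕ) : B.etaMul η p 0 = 0 := by
  simp only [etaMul]
  rw [mul_zero, cast_family_zero (add_comm 1 p)]

theorem etaMul_add (p : ℕ) (x y : B.A p) :
    B.etaMul η p (x + y) = B.etaMul η p x + B.etaMul η p y := by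
  simp only [etaMul]
  rw [B.mul_add, cast_family_add (add_comm 1 p)]

theorem etaMul_etaMul [NeZero (2 : k)] (p : ℕ) (x : B.A p) :
    B.etaMul η (p + 1) (B.etaMul η p x) = 0 := by
  have hassoc := B.mul_assoc 1 1 p η η x
  rw [mul_self_eq_zero, zero_mul, eq_comm, cast_family_eq_zero (add_assoc 1 1 p).symm] at hassoc
  simp only [etaMul]
  rw [apply_cast_family (fun q => B.mul 1 q η) (add_comm 1 p), cast_cast, hassoc,
    cast_family_zero (by omega)]

end

section

variable {η : B.A 1} (m : ℕ)

theorem thickD_add (p : ℕ) (ω ω' : Fin m → B.A p) :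
    B.thickD η m p (ω + ω') = B.thickD η m p ω + B.thickD η m p ω' := by
  funext j
  simp only [thickD, Pi.add_apply, B.d_add]
  split_ifs
  · abel
  · rw [etaMul_add]; abel

theorem thickD_thickD [NeZero (2 : k)] (hη : B.d 1 η = 0) (p : ℕ)
    (ω : Fin m → B.A p) : B.thickD η m (p + 1) (B.thickD η m p ω) = 0 := by
  funext j
  simp only [thickD, Pi.zero_apply]
  split_ifs
  · rw [add_zero, add_zero, B.d_d]
  · rw [B.d_add, B.d_d, zero_add, d_etaMul B hη, etaMul_add, etaMul_zero]; abel
  · rw [B.d_add, B.d_d, zero_add, d_etaMul B hη, etaMul_add, etaMul_etaMul]; abel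

theorem thickD_single_last (p : ℕ) (a : B.A p) :
    B.thickD η (m + 1) p (Pi.single (Fin.last m) a) = Pi.single (Fin.last m) (B.d p a) := by
  funext j
  rw [thickD, Pi.apply_single (fun _ => B.d p) (fun _ => B.d_zero p), add_eq_left]
  split_ifs
  · rfl
  · rw [Pi.single_eq_of_ne (Fin.ne_of_lt (show (j : ℕ) - 1 < m by omega)), etaMul_zero]

end

end GCDA

namespace GCDAHom

variable {B C : GCDA k} (φ : GCDAHom B C)

theorem F_zero (p : ℕ) : φ.F p 0 = 0 := by
  simpa using φ.F_add p 0 0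

theorem F_etaMul (η : B.A 1) (p : ℕ) (x : B.A p) :
    φ.F (p + 1) (B.etaMul η p x) = C.etaMul (φ.F 1 η) p (φ.F p x) := by
  simp only [GCDA.etaMul]
  rw [apply_cast_family φ.F (add_comm 1 p), φ.F_mul]

theorem F_d_eq_zero {η : B.A 1} (hη : B.d 1 η = 0) : C.d 1 (φ.F 1 η) = 0 := by
  rw [← φ.F_d, hη, F_zero]

theorem F_thickD (η : B.A 1) (m p : ℕ) (ω : Fin m → B.A p) (j : Fin m) :
    φ.F (p + 1) (B.thickD η m p ω j) = C.thickD (φ.F 1 η) m p (fun i => φ.F p (ω i)) j := by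
  simp only [GCDA.thickD, φ.F_add, φ.F_d]
  split_ifs
  · rw [φ.F_zero]
  · rw [φ.F_etaMul]

end GCDAHom

structure GradedComplex where
  X : ℕ → Type
  [acg : ∀ n, AddCommGroup (X n)]
  d : ∀ p, X p →+ X (p + 1)
  d_d : ∀ p x, d (p + 1) (d p x) = 0

attribute [instance] GradedComplex.acg

namespace GradedComplex

variable {K L : GradedComplex}

structure Hom (K L : GradedComplex) where
  f : ∀ p, K.X p →+ L.X p
  f_d : ∀ p x, f (p + 1) (K.d p x) = L.d p (f p x)

def boundaries (K : GradedComplex) : ∀ n, AddSubgroup (K.X n)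
  | 0 => ⊥
  | p + 1 => (K.d p).range

theorem mem_boundaries_zero {x : K.X 0} : x ∈ K.boundaries 0 ↔ x = 0 :=
  AddSubgroup.mem_bot

theorem mem_boundaries_succ {p : ℕ} {x : K.X (p + 1)} :
    x ∈ K.boundaries (p + 1) ↔ ∃ z, K.d p z = x :=
  AddMonoidHom.mem_range

theorem d_mem_boundaries (p : ℕ) (z : K.X p) : K.d p z ∈ K.boundaries (p + 1) :=
  ⟨z, rfl⟩

theorem d_eq_zero_of_mem_boundaries {n : ℕ} {x : K.X n} (hx : x ∈ K.boundaries n) :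
    K.d n x = 0 := by
  cases n with
  | zero => rw [mem_boundaries_zero.mp hx, map_zero]
  | succ p => obtain ⟨z, rfl⟩ := mem_boundaries_succ.mp hx; exact K.d_d p z

namespace Hom

variable (φ : K.Hom L)

def IsQuasiIso : Prop :=
  IsQIso K.X L.X (fun p => K.d p) (fun p => L.d p) (fun p => φ.f p)

def InjectiveOnCohomology (n : ℕ) : Prop :=
  ∀ x : K.X n, K.d n x = 0 → φ.f n x ∈ L.boundaries n → x ∈ K.boundaries n

def SurjectiveOnCohomology (n : ℕ) : Prop :=
  ∀ y : L.X n, L.d n y = 0 → ∃ x, K.d n x = 0 ∧ ∃ b ∈ L.boundaries n, φ.f n x = y + b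

theorem injectiveOnCohomology_zero_iff :
    φ.InjectiveOnCohomology 0 ↔ ∀ x, K.d 0 x = 0 → φ.f 0 x = 0 → x = 0 := by
  simp only [InjectiveOnCohomology, mem_boundaries_zero]

theorem surjectiveOnCohomology_zero_iff :
    φ.SurjectiveOnCohomology 0 ↔ ∀ y, L.d 0 y = 0 → ∃ x, K.d 0 x = 0 ∧ φ.f 0 x = y := by
  simp only [SurjectiveOnCohomology, mem_boundaries_zero, exists_eq_left, add_zero]

theorem injectiveOnCohomology_succ_iff (p : ℕ) :
    φ.InjectiveOnCohomology (p + 1) ↔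
      ∀ x, K.d (p + 1) x = 0 → (∃ y, φ.f (p + 1) x = L.d p y) → ∃ z, x = K.d p z := by
  simp only [InjectiveOnCohomology, mem_boundaries_succ, eq_comm]

theorem surjectiveOnCohomology_succ_iff (p : ℕ) :
    φ.SurjectiveOnCohomology (p + 1) ↔
      ∀ y, L.d (p + 1) y = 0 → ∃ x, K.d (p + 1) x = 0 ∧ ∃ w, φ.f (p + 1) x = y + L.d p w := by
  simp only [SurjectiveOnCohomology, mem_boundaries_succ, exists_exists_eq_and]

theorem isQuasiIso_iff :
    φ.IsQuasiIso ↔ ∀ n, φ.InjectiveOnCohomology n ∧ φ.SurjectiveOnCohomology n := by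
  rw [forall_and, ← Nat.and_forall_add_one (p := φ.InjectiveOnCohomology),
    ← Nat.and_forall_add_one (p := φ.SurjectiveOnCohomology), injectiveOnCohomology_zero_iff,
    surjectiveOnCohomology_zero_iff]
  simp only [injectiveOnCohomology_succ_iff, surjectiveOnCohomology_succ_iff, IsQuasiIso, IsQIso]
  tauto

theorem map_mem_boundaries {n : ℕ} {x : K.X n} (hx : x ∈ K.boundaries n) :
    φ.f n x ∈ L.boundaries n := by
  cases n with
  | zero => rw [mem_boundaries_zero.mp hx, map_zero]; exact zero_mem _
  | succ p => obtain ⟨z, rfl⟩ := mem_boundaries_succ.mp hx; rw [φ.f_d]; exact d_mem_boundaries p _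

theorem exists_mem_boundaries_of_surjective (hφ : ∀ p, Function.Surjective (φ.f p)) {n : ℕ}
    {y : L.X n} (hy : y ∈ L.boundaries n) : ∃ x ∈ K.boundaries n, φ.f n x = y := by
  cases n with
  | zero => exact ⟨0, zero_mem _, by rw [map_zero, mem_boundaries_zero.mp hy]⟩
  | succ p =>
    obtain ⟨z, rfl⟩ := mem_boundaries_succ.mp hy
    obtain ⟨x, rfl⟩ := hφ p z
    exact ⟨K.d p x, d_mem_boundaries p x, φ.f_d p x⟩

end Hom

variable {M Q K' M' Q' : GradedComplex}

structure ShortExact (K M Q : GradedComplex) where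
  ι : K.Hom M
  π : M.Hom Q
  ι_injective : ∀ p, Function.Injective (ι.f p)
  π_surjective : ∀ p, Function.Surjective (π.f p)
  π_ι : ∀ p a, π.f p (ι.f p a) = 0
  exact : ∀ p x, π.f p x = 0 → ∃ a, ι.f p a = x

namespace ShortExact

variable (S : ShortExact K M Q)

theorem exists_cycle_of_π_eq_zero {n : ℕ} {x : M.X n} (hx : M.d n x = 0) (hπx : S.π.f n x = 0) :
    ∃ a, K.d n a = 0 ∧ S.ι.f n a = x := by
  obtain ⟨a, rfl⟩ := S.exact n x hπx
  refine ⟨a, S.ι_injective (n + 1) ?_, rfl⟩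
  rw [S.ι.f_d, hx, map_zero]

theorem exists_ι_eq_d {n : ℕ} (x : M.X n) (hx : Q.d n (S.π.f n x) = 0) :
    ∃ c, K.d (n + 1) c = 0 ∧ S.ι.f (n + 1) c = M.d n x :=
  S.exists_cycle_of_π_eq_zero (M.d_d n x) (by rw [S.π.f_d, hx])

structure Hom (S : ShortExact K M Q) (S' : ShortExact K' M' Q') where
  τ₁ : K.Hom K'
  τ₂ : M.Hom M'
  τ₃ : Q.Hom Q'
  comm_ι : ∀ p a, τ₂.f p (S.ι.f p a) = S'.ι.f p (τ₁.f p a)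
  comm_π : ∀ p x, τ₃.f p (S.π.f p x) = S'.π.f p (τ₂.f p x)

namespace Hom

variable {S : ShortExact K M Q} {S' : ShortExact K' M' Q'} (Φ : S.Hom S')

theorem surjectiveOnCohomology {n : ℕ} (h₁ : Φ.τ₁.InjectiveOnCohomology (n + 1))
    (h₁' : Φ.τ₁.SurjectiveOnCohomology n) (h₃ : Φ.τ₃.SurjectiveOnCohomology n) :
    Φ.τ₂.SurjectiveOnCohomology n := by
  intro y hy
  obtain ⟨q, hq, β, hβ, hqy⟩ := h₃ (S'.π.f n y) (by rw [← S'.π.f_d, hy, map_zero])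
  obtain ⟨β', hβ', rfl⟩ := S'.π.exists_mem_boundaries_of_surjective S'.π_surjective hβ
  obtain ⟨x, rfl⟩ := S.π_surjective n q
  obtain ⟨c, hc, hcx⟩ := S.exists_ι_eq_d x hq
  obtain ⟨a, ha⟩ := S'.exact n (y + β' - Φ.τ₂.f n x)
    (by rw [map_sub, map_add, ← Φ.comm_π, hqy, sub_self])
  have hac : K'.d n a + Φ.τ₁.f (n + 1) c = 0 := S'.ι_injective (n + 1) <| by
    rw [map_add, S'.ι.f_d, ha, ← Φ.comm_ι, hcx, map_zero, map_sub, map_add, hy,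
      d_eq_zero_of_mem_boundaries hβ', ← Φ.τ₂.f_d]
    abel
  obtain ⟨e, rfl⟩ := mem_boundaries_succ.mp <| h₁ c hc <| mem_boundaries_succ.mpr
    ⟨-a, by rw [map_neg, neg_eq_iff_add_eq_zero, hac]⟩
  obtain ⟨b, hb, β'', hβ'', hfb⟩ := h₁' (a + Φ.τ₁.f n e) (by rw [map_add, ← Φ.τ₁.f_d, hac])
  refine ⟨x - S.ι.f n e + S.ι.f n b, ?_, β' + S'.ι.f n β'',
    add_mem hβ' (S'.ι.map_mem_boundaries hβ''), ?_⟩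
  · rw [map_add, map_sub, ← S.ι.f_d, ← S.ι.f_d, hb, map_zero, add_zero, hcx, sub_self]
  · rw [map_add, map_sub, Φ.comm_ι, Φ.comm_ι, hfb, map_add, map_add, ha]
    abel

theorem injectiveOnCohomology {n : ℕ} (h₃ : Φ.τ₃.InjectiveOnCohomology n)
    (hδ : ∀ a, K.d n a = 0 → S'.ι.f n (Φ.τ₁.f n a) ∈ M'.boundaries n →
      S.ι.f n a ∈ M.boundaries n) :
    Φ.τ₂.InjectiveOnCohomology n := by
  intro x hx hgx
  have hπx : S.π.f n x ∈ Q.boundaries n := h₃ _ (by rw [← S.π.f_d, hx, map_zero])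
    (by rw [Φ.comm_π]; exact S'.π.map_mem_boundaries hgx)
  obtain ⟨z, hz, hπz⟩ := S.π.exists_mem_boundaries_of_surjective S.π_surjective hπx
  obtain ⟨a, ha, hax⟩ := S.exists_cycle_of_π_eq_zero (x := x - z)
    (by rw [map_sub, hx, d_eq_zero_of_mem_boundaries hz, sub_zero]) (by rw [map_sub, hπz, sub_self])
  have hιa : S.ι.f n a ∈ M.boundaries n := hδ a ha <| by
    rw [← Φ.comm_ι, hax, map_sub]
    exact sub_mem hgx (Φ.τ₂.map_mem_boundaries hz)
  rw [hax] at hιa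
  simpa using add_mem hιa hz

theorem ι_mem_boundaries_zero (h₁ : Φ.τ₁.InjectiveOnCohomology 0) {a : K.X 0}
    (ha : K.d 0 a = 0) (hfa : S'.ι.f 0 (Φ.τ₁.f 0 a) ∈ M'.boundaries 0) :
    S.ι.f 0 a ∈ M.boundaries 0 := by
  have hfa0 : Φ.τ₁.f 0 a = 0 := S'.ι_injective 0 (by rw [mem_boundaries_zero.mp hfa, map_zero])
  rw [mem_boundaries_zero.mp (h₁ a ha (mem_boundaries_zero.mpr hfa0)), map_zero]
  exact zero_mem _

-- The connecting homomorphism `H^p(Q) → H^(p+1)(K)` is hidden in this chase.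
theorem ι_mem_boundaries_succ {p : ℕ} (h₁ : Φ.τ₁.InjectiveOnCohomology (p + 1))
    (h₃ : Φ.τ₃.SurjectiveOnCohomology p) {a : K.X (p + 1)} (ha : K.d (p + 1) a = 0)
    (hfa : S'.ι.f (p + 1) (Φ.τ₁.f (p + 1) a) ∈ M'.boundaries (p + 1)) :
    S.ι.f (p + 1) a ∈ M.boundaries (p + 1) := by
  obtain ⟨y, hy⟩ := mem_boundaries_succ.mp hfa
  obtain ⟨u, hu, β, hβ, hyu⟩ := h₃ (S'.π.f p y) (by rw [← S'.π.f_d, hy, S'.π_ι])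
  obtain ⟨β', hβ', rfl⟩ := S'.π.exists_mem_boundaries_of_surjective S'.π_surjective hβ
  obtain ⟨x, rfl⟩ := S.π_surjective p u
  obtain ⟨c, hc, hcx⟩ := S.exists_ι_eq_d x hu
  obtain ⟨b, hb⟩ := S'.exact p (y + β' - Φ.τ₂.f p x)
    (by rw [map_sub, map_add, ← Φ.comm_π, hyu, sub_self])
  have hfac : K'.d p b = Φ.τ₁.f (p + 1) (a - c) := S'.ι_injective (p + 1) <| by
    rw [map_sub (Φ.τ₁.f (p + 1)), map_sub (S'.ι.f (p + 1)), ← Φ.comm_ι (p + 1) c, hcx,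
      Φ.τ₂.f_d, ← hy, S'.ι.f_d, hb, map_sub, map_add, d_eq_zero_of_mem_boundaries hβ', add_zero]
  obtain ⟨e, he⟩ := mem_boundaries_succ.mp <|
    h₁ (a - c) (by rw [map_sub, ha, hc, sub_zero]) (mem_boundaries_succ.mpr ⟨b, hfac⟩)
  refine mem_boundaries_succ.mpr ⟨S.ι.f p e + x, ?_⟩
  rw [map_add, ← S.ι.f_d, he, ← hcx, ← map_add, sub_add_cancel]

theorem isQuasiIso (h₁ : Φ.τ₁.IsQuasiIso) (h₃ : Φ.τ₃.IsQuasiIso) : Φ.τ₂.IsQuasiIso := by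
  rw [GradedComplex.Hom.isQuasiIso_iff] at h₁ h₃ ⊢
  refine fun n => ⟨Φ.injectiveOnCohomology (h₃ n).1 ?_,
    Φ.surjectiveOnCohomology (h₁ (n + 1)).1 (h₁ n).2 (h₃ n).2⟩
  cases n with
  | zero => exact fun a ha => Φ.ι_mem_boundaries_zero (h₁ 0).1 ha
  | succ p => exact fun a ha => Φ.ι_mem_boundaries_succ (h₁ (p + 1)).1 (h₃ p).2 ha

end Hom

end ShortExact

end GradedComplex

theorem IsQIso.of_subsingleton {X Y : ℕ → Type} [∀ n, AddCommGroup (X n)]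
    [∀ n, AddCommGroup (Y n)] [∀ n, Subsingleton (X n)] [∀ n, Subsingleton (Y n)]
    (dX : ∀ p : ℕ, X p → X (p + 1)) (dY : ∀ p : ℕ, Y p → Y (p + 1)) (F : ∀ p : ℕ, X p → Y p) :
    IsQIso X Y dX dY F :=
  ⟨fun _ _ _ => Subsingleton.elim _ _,
    fun _ _ => ⟨0, Subsingleton.elim _ _, Subsingleton.elim _ _⟩,
    fun _ _ _ _ => ⟨0, Subsingleton.elim _ _⟩,
    fun _ _ _ => ⟨0, Subsingleton.elim _ _, 0, Subsingleton.elim _ _⟩⟩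

namespace GCDA

variable (B : GCDA k)

def toGradedComplex : GradedComplex where
  X := B.A
  d p := AddMonoidHom.mk' (B.d p) (B.d_add p)
  d_d := B.d_d

variable [NeZero (2 : k)] {η : B.A 1} (hη : B.d 1 η = 0)

abbrev thickening (m : ℕ) : GradedComplex where
  X p := Fin m → B.A p
  d p := AddMonoidHom.mk' (B.thickD η m p) (B.thickD_add m p)
  d_d := B.thickD_thickD m hη

-- `ι` is multiplication by `s^m` and `π` is reduction modulo `s^m`.
def truncation (m : ℕ) :
    B.toGradedComplex.ShortExact (B.thickening hη (m + 1)) (B.thickening hη m) where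
  ι := { f p := AddMonoidHom.single (fun _ => B.A p) (Fin.last m)
         f_d p a := (B.thickD_single_last m p a).symm }
  π := { f _ := AddMonoidHom.mk' Fin.init (fun _ _ => rfl)
         f_d _ _ := rfl }
  ι_injective p := Pi.single_injective (M := fun _ => B.A p) (Fin.last m)
  π_surjective p y := ⟨Fin.snoc y 0, Fin.init_snoc (α := fun _ => B.A p) 0 y⟩
  π_ι p a := funext fun j => Pi.single_eq_of_ne (M := fun _ => B.A p) (Fin.castSucc_lt_last j).ne a
  exact _ x hx := ⟨x (Fin.last m), funext fun j => by
    induction j using Fin.lastCases with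
    | last => exact Pi.single_eq_same _ _
    | cast i => exact (Pi.single_eq_of_ne (Fin.castSucc_lt_last i).ne _).trans (congrFun hx i).symm⟩

end GCDA

namespace GCDAHom

variable {B C : GCDA k} (φ : GCDAHom B C)

def toHom : B.toGradedComplex.Hom C.toGradedComplex where
  f p := AddMonoidHom.mk' (φ.F p) (φ.F_add p)
  f_d := φ.F_d

variable [NeZero (2 : k)] {η : B.A 1} (hη : B.d 1 η = 0)

def thickeningHom (m : ℕ) : (B.thickening hη m).Hom (C.thickening (φ.F_d_eq_zero hη) m) where
  f p := (φ.toHom.f p).compLeft (Fin m)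
  f_d p ω := funext (φ.F_thickD η m p ω)

def truncationHom (m : ℕ) : (B.truncation hη m).Hom (C.truncation (φ.F_d_eq_zero hη) m) where
  τ₁ := φ.toHom
  τ₂ := φ.thickeningHom hη (m + 1)
  τ₃ := φ.thickeningHom hη m
  comm_ι p a := funext (Pi.apply_single (fun _ => φ.F p) (fun _ => φ.F_zero p) (Fin.last m) a)
  comm_π _ _ := rfl

theorem thickeningHom_isQuasiIso (hφ : φ.toHom.IsQuasiIso) (m : ℕ) :
    (φ.thickeningHom hη m).IsQuasiIso := by
  induction m with
  | zero => exact IsQIso.of_subsingleton _ _ _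
  | succ m ih => exact (φ.truncationHom hη m).isQuasiIso hφ ih

end GCDAHom

theorem stmt_6_general {k : Type} [Field k] [CharZero k] (B C : GCDA k) (φ : GCDAHom B C)
    (η : B.A 1) (hη : B.d 1 η = 0) (m : ℕ)
    (hq : IsQIso B.A C.A B.d C.d φ.F) :
    IsQIso (fun p => Fin m → B.A p) (fun p => Fin m → C.A p)
      (B.thickD η m) (C.thickD (φ.F 1 η) m)
      (fun p ω j => φ.F p (ω j)) :=
  φ.thickeningHom_isQuasiIso hη hq m

/-- If `F : A → B` is a quasi-isomorphism of cdgas, `η ∈ A¹ ∩ ker d`, and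
`m ≥ 1`, then the induced map `F ⊗ id : A(η, m) → B(F(η), m)` of thickened complexes is a
quasi-isomorphism. -/
theorem stmt_6 {k : Type} [Field k] [CharZero k] (B C : GCDA k) (φ : GCDAHom B C)
    (η : B.A 1) (hη : B.d 1 η = 0) (m : ℕ) (hm : 1 ≤ m)
    (hq : IsQIso B.A C.A B.d C.d φ.F) :
    IsQIso (fun p => Fin m → B.A p) (fun p => Fin m → C.A p)
      (B.thickD η m) (C.thickD (φ.F 1 η) m)
      (fun p ω j => φ.F p (ω j)) :=
  stmt_6_general B C φ η hη m hq
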